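/- arXiv:physics/0404146 — 5 statements merged into one kernel-verified Lean document; each statement's English description precedes it below -/
import Mathlib

section
/- Let E be a real inner product space, let Q : E → E be an orthogonal projection (a linear map with Q ∘ Q = Q and ⟪Q x, y⟫ = ⟪x, Q y⟫ for all x, y), and let u, z ∈ E with z ≠ 0. Then the function α ↦ (‖Q(u + α • z)‖² − 2⟪Q u, u + α • z⟫·exp(−α²‖z‖²/2) + ‖Q u‖²) / (2·(1 − exp(−α²‖z‖²/2))) tends to ‖Q u‖² + ‖Q z‖²/‖z‖² as α → 0 with α ≠ 0. -/
/-!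
Write `w = Q u`, `v = Q (u + α • z)` and `t = exp (-(α² ‖z‖²) / 2)`. Symmetry and idempotence
of `Q` give `⟪Q u, u + α • z⟫ = ⟪w, v⟫`, and the numerator is `‖v - w‖² + 2 ⟪w, v⟫ (1 - t)`
with `v - w = α • Q z`. The quotient is therefore `⟪w, v⟫ + ‖Q z‖² α² / (2 (1 - t))`, and
`α² / (2 (1 - t)) → 1 / ‖z‖²` because `x / (exp x - 1) → 1`.
-/

open Filter Topology RealInnerProductSpace

theorem Real.tendsto_div_exp_sub_one_nhdsNE :
    Tendsto (fun x : ℝ => x / (Real.exp x - 1)) (𝓝[≠] 0) (𝓝 1) := by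
  have h := (Real.hasDerivAt_exp 0).tendsto_slope_zero
  simp only [zero_add, Real.exp_zero, smul_eq_mul] at h
  simpa [inv_mul_eq_div] using h.inv₀ one_ne_zero

theorem tendsto_sq_div_two_mul_one_sub_exp {κ : ℝ} (hκ : κ ≠ 0) :
    Tendsto (fun α : ℝ => α ^ 2 / (2 * (1 - Real.exp (-(α ^ 2 * κ) / 2))))
      (𝓝[≠] 0) (𝓝 κ⁻¹) := by
  have hs : Tendsto (fun α : ℝ => -(α ^ 2 * κ) / 2) (𝓝[≠] 0) (𝓝[≠] 0) := by
    refine tendsto_nhdsWithin_of_tendsto_nhds_of_eventually_within _ ?_ ?_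
    · exact ((Continuous.tendsto (by fun_prop) 0).mono_left nhdsWithin_le_nhds).trans
        (by simp)
    · filter_upwards [self_mem_nhdsWithin] with α (hα : α ≠ 0)
      simpa using And.intro hα hκ
  have h := (Real.tendsto_div_exp_sub_one_nhdsNE.comp hs).const_mul κ⁻¹
  rw [mul_one] at h
  refine h.congr fun α => ?_
  simp only [Function.comp_apply]
  rw [← neg_sub (Real.exp _), mul_neg, div_neg, neg_div, neg_div, mul_neg]
  field_simp

section InnerProductSpace

variable {E : Type*} [NormedAddCommGroup E] [InnerProductSpace ℝ E]

theorem norm_sq_sub_two_inner_mul_add_norm_sq_div (v w : E) {t : ℝ} (ht : 1 - t ≠ 0) :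
    (‖v‖ ^ 2 - 2 * ⟪w, v⟫ * t + ‖w‖ ^ 2) / (2 * (1 - t)) =
      ⟪w, v⟫ + ‖v - w‖ ^ 2 / (2 * (1 - t)) := by
  rw [norm_sub_sq_real, real_inner_comm]
  field_simp
  ring

theorem inner_map_left_eq_inner_map_map {Q : E →ₗ[ℝ] E} (hQidem : ∀ x, Q (Q x) = Q x)
    (hQsym : ∀ x y : E, ⟪Q x, y⟫ = ⟪x, Q y⟫) (x y : E) : ⟪Q x, y⟫ = ⟪Q x, Q y⟫ := by
  rw [← hQsym, hQidem]

end InnerProductSpace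

/-- For an orthogonal projection `Q` on a real inner product space `E`
and `u z : E` with `z ≠ 0`, the function
`α ↦ (‖Q(u + α•z)‖² − 2⟪Q u, u + α•z⟫·exp(−α²‖z‖²/2) + ‖Q u‖²) / (2·(1 − exp(−α²‖z‖²/2)))`
tends to `‖Q u‖² + ‖Q z‖²/‖z‖²` as `α → 0`, `α ≠ 0`. -/
theorem stmt0 {E : Type*} [NormedAddCommGroup E] [InnerProductSpace ℝ E]
    (Q : E →ₗ[ℝ] E) (hQidem : ∀ x, Q (Q x) = Q x)
    (hQsym : ∀ x y : E, ⟪Q x, y⟫ = ⟪x, Q y⟫)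
    (u z : E) (hz : z ≠ 0) :
    Tendsto (fun α : ℝ =>
        (‖Q (u + α • z)‖ ^ 2
          - 2 * ⟪Q u, u + α • z⟫ * Real.exp (-(α ^ 2 * ‖z‖ ^ 2) / 2)
          + ‖Q u‖ ^ 2)
        / (2 * (1 - Real.exp (-(α ^ 2 * ‖z‖ ^ 2) / 2))))
      (𝓝[≠] (0 : ℝ))
      (𝓝 (‖Q u‖ ^ 2 + ‖Q z‖ ^ 2 / ‖z‖ ^ 2)) := by
  have hinner : Tendsto (fun α : ℝ => ⟪Q u, Q (u + α • z)⟫) (𝓝[≠] 0) (𝓝 (‖Q u‖ ^ 2)) := by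
    simp only [map_add, map_smul, ← real_inner_self_eq_norm_sq]
    refine ((Continuous.tendsto (by fun_prop) 0).mono_left nhdsWithin_le_nhds).trans ?_
    simp
  have hκ : ‖z‖ ^ 2 ≠ 0 := by positivity
  have hlim := hinner.add ((tendsto_sq_div_two_mul_one_sub_exp hκ).const_mul (‖Q z‖ ^ 2))
  rw [← div_eq_mul_inv] at hlim
  refine hlim.congr' ?_
  filter_upwards [self_mem_nhdsWithin] with α (hα : α ≠ 0)
  have hexp : 1 - Real.exp (-(α ^ 2 * ‖z‖ ^ 2) / 2) ≠ 0 := by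
    simp [sub_eq_zero, eq_comm (a := (1 : ℝ)), hα, hz]
  rw [inner_map_left_eq_inner_map_map hQidem hQsym u (u + α • z),
    norm_sq_sub_two_inner_mul_add_norm_sq_div _ _ hexp, map_add, add_sub_cancel_left, map_smul,
    norm_smul, mul_pow, Real.norm_eq_abs, sq_abs]
  ring
end

section
/- Let E be a real inner product space and let u, z, y ∈ E with ‖z‖ = 1. Then the function α ↦ (exp(⟪u + α • z, y⟫ − ‖u + α • z‖²/2) − exp(⟪u, y⟫ − ‖u‖²/2)) / (√2 · √(1 − exp(−α²/2))) tends to (⟪z, y⟫ − ⟪u, z⟫) · exp(⟪u, y⟫ − ‖u‖²/2) as α → 0 from the right (α → 0⁺). -/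
open Filter Topology RealInnerProductSpace

/-- scalar reduction of the convergence of the normalized differences
`(c(u+αz) − c(u))/(√2·√(1 − e^{−α²/2}))` to the state `z#c(u)`, paired with `e^y`. -/
theorem stmt1 {E : Type*} [NormedAddCommGroup E] [InnerProductSpace ℝ E]
    (u z y : E) (hz : ‖z‖ = 1) :
    Tendsto (fun α : ℝ =>
        (Real.exp (⟪u + α • z, y⟫ - ‖u + α • z‖ ^ 2 / 2)
          - Real.exp (⟪u, y⟫ - ‖u‖ ^ 2 / 2))
        / (Real.sqrt 2 * Real.sqrt (1 - Real.exp (-α ^ 2 / 2))))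
      (𝓝[>] (0 : ℝ))
      (𝓝 ((⟪z, y⟫ - ⟪u, z⟫) * Real.exp (⟪u, y⟫ - ‖u‖ ^ 2 / 2))) := by
  set c0 : ℝ := ⟪u, y⟫ - ‖u‖ ^ 2 / 2 with hc0
  set c1 : ℝ := ⟪z, y⟫ - ⟪u, z⟫ with hc1
  set g : ℝ → ℝ := fun α => c0 + α * c1 - α ^ 2 / 2 with hgdef
  set f : ℝ → ℝ := fun α => Real.exp (g α) with hfdef
  -- rewrite numerator's exponent
  have hexp : ∀ α : ℝ, ⟪u + α • z, y⟫ - ‖u + α • z‖ ^ 2 / 2 = g α := by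
    intro α
    have hnorm : ‖u + α • z‖ ^ 2 = ‖u‖ ^ 2 + 2 * (α * ⟪u, z⟫) + α ^ 2 := by
      rw [norm_add_sq_real, real_inner_smul_right, norm_smul, hz]
      simp [mul_pow, sq_abs]
    have hin : ⟪u + α • z, y⟫ = ⟪u, y⟫ + α * ⟪z, y⟫ := by
      rw [inner_add_left, real_inner_smul_left]
    rw [hin, hnorm, hgdef, hc0, hc1]; ring
  have hg0 : g 0 = c0 := by simp [hgdef]
  -- derivative of f at 0
  have hgd : HasDerivAt g c1 0 := by
    have h1 : HasDerivAt (fun α : ℝ => α * c1) c1 0 := by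
      simpa using (hasDerivAt_id (0 : ℝ)).mul_const c1
    have h2 : HasDerivAt (fun α : ℝ => α ^ 2 / 2) 0 0 := by
      simpa using (hasDerivAt_pow 2 (0 : ℝ)).div_const 2
    have h3 := (h1.const_add c0).sub h2
    rw [sub_zero] at h3
    exact h3
  have hfd : HasDerivAt f (Real.exp c0 * c1) 0 := by
    simpa [hfdef, hg0] using hgd.exp
  have hslope : Tendsto (fun α : ℝ => (f α - f 0) / α) (𝓝[>] 0)
      (𝓝 (Real.exp c0 * c1)) := by
    have := hasDerivAt_iff_tendsto_slope.mp hfd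
    have h2 : Tendsto (slope f 0) (𝓝[>] 0) (𝓝 (Real.exp c0 * c1)) :=
      this.mono_left (nhdsWithin_mono _ (fun x hx => ne_of_gt hx))
    have hk : slope f 0 = fun α => (f α - f 0) / α := by
      funext α; rw [slope_def_field]; ring
    rwa [hk] at h2
  -- the ratio α / (√2 √(1 - e^{-α²/2})) → 1
  have hhd : HasDerivAt (fun t : ℝ => 1 - Real.exp (-t)) 1 0 := by
    have : HasDerivAt (fun t : ℝ => Real.exp (-t)) (-1) 0 := by
      simpa using (hasDerivAt_id (0 : ℝ)).neg.exp
    simpa using (this.const_sub 1)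
  have hsl2 : Tendsto (fun t : ℝ => (1 - Real.exp (-t)) / t) (𝓝[>] 0) (𝓝 1) := by
    have := hasDerivAt_iff_tendsto_slope.mp hhd
    have h2 : Tendsto (slope (fun t : ℝ => 1 - Real.exp (-t)) 0) (𝓝[>] 0) (𝓝 1) :=
      this.mono_left (nhdsWithin_mono _ (fun x (hx : x ∈ Set.Ioi 0) => ne_of_gt hx))
    have hk : slope (fun t : ℝ => 1 - Real.exp (-t)) 0
        = fun t => (1 - Real.exp (-t)) / t := by
      funext t; rw [slope_def_field]; simp
    rwa [hk] at h2
  have hinv : Tendsto (fun t : ℝ => t / (1 - Real.exp (-t))) (𝓝[>] 0) (𝓝 1) := by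
    have := hsl2.inv₀ one_ne_zero
    simpa [inv_div] using this
  have hsq : Tendsto (fun α : ℝ => α ^ 2 / 2) (𝓝[>] 0) (𝓝[>] 0) := by
    apply tendsto_nhdsWithin_of_tendsto_nhds_of_eventually_within
    · exact (((continuous_pow 2).div_const 2).tendsto' 0 0 (by norm_num)).mono_left
        nhdsWithin_le_nhds
    · filter_upwards [self_mem_nhdsWithin] with a (ha : a ∈ Set.Ioi 0)
      have : (0:ℝ) < a := ha
      simp only [Set.mem_Ioi]
      positivity
  have hratio2 : Tendsto (fun α : ℝ => (α ^ 2 / 2) / (1 - Real.exp (-(α ^ 2 / 2))))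
      (𝓝[>] 0) (𝓝 1) := hinv.comp hsq
  have hr : Tendsto (fun α : ℝ => Real.sqrt ((α ^ 2 / 2) / (1 - Real.exp (-(α ^ 2 / 2)))))
      (𝓝[>] 0) (𝓝 1) := by
    have := hratio2.sqrt
    simpa using this
  -- eventually, the function equals (slope) * (sqrt ratio)
  have hev : ∀ᶠ α in 𝓝[>] (0:ℝ),
      (Real.exp (⟪u + α • z, y⟫ - ‖u + α • z‖ ^ 2 / 2)
          - Real.exp (⟪u, y⟫ - ‖u‖ ^ 2 / 2))
        / (Real.sqrt 2 * Real.sqrt (1 - Real.exp (-α ^ 2 / 2)))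
      = ((f α - f 0) / α) * Real.sqrt ((α ^ 2 / 2) / (1 - Real.exp (-(α ^ 2 / 2)))) := by
    filter_upwards [self_mem_nhdsWithin] with α (hα : α ∈ Set.Ioi 0)
    have hα0 : (0:ℝ) < α := hα
    have hb : (0:ℝ) < 1 - Real.exp (-(α ^ 2 / 2)) := by
      have : Real.exp (-(α ^ 2 / 2)) < 1 := by
        rw [Real.exp_lt_one_iff]; nlinarith
      linarith
    have hnum : Real.exp (⟪u + α • z, y⟫ - ‖u + α • z‖ ^ 2 / 2)
        - Real.exp (⟪u, y⟫ - ‖u‖ ^ 2 / 2) = f α - f 0 := by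
      rw [hexp α]; simp [hfdef, hg0, hc0]
    have hsqrt : Real.sqrt ((α ^ 2 / 2) / (1 - Real.exp (-(α ^ 2 / 2))))
        = α / (Real.sqrt 2 * Real.sqrt (1 - Real.exp (-(α ^ 2 / 2)))) := by
      rw [Real.sqrt_div (by positivity), Real.sqrt_div (by positivity),
        Real.sqrt_sq hα0.le, div_div]
    have hneg : -α ^ 2 / 2 = -(α ^ 2 / 2) := by ring
    rw [hnum, hneg, hsqrt]
    field_simp
  have hlim : Tendsto (fun α : ℝ => ((f α - f 0) / α)
        * Real.sqrt ((α ^ 2 / 2) / (1 - Real.exp (-(α ^ 2 / 2)))))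
      (𝓝[>] 0) (𝓝 (c1 * Real.exp c0)) := by
    have := hslope.mul hr
    simpa [mul_comm] using this
  exact (Tendsto.congr' (hev.mono fun α h => h.symm) hlim)
end

section
/- Let E be a real inner product space, let u, v, z, y ∈ E with ‖z‖ = 1, and let λ ∈ ℝ. Set s = ⟪u − v, z⟫, ω = exp(−‖u − v‖²/2), and for x ∈ E set E_x = exp(⟪x, y⟫ − ‖x‖²/2). Assume (1 + λ²) + 2λω(1 − s²) > 0. Then the function α ↦ (E_u − E_{u+α•z} + λ(E_v − E_{v+α•z})) / √(2(1 + λ²)(1 − exp(−α²/2)) + 2λ(2ω − ω·exp(−α²/2)·(exp(αs) + exp(−αs)))) tends, as α → 0 from the right, to ((⟪u, z⟫ − ⟪z, y⟫)E_u + λ(⟪v, z⟫ − ⟪z, y⟫)E_v) / √((1 + λ²) + 2λω(1 − s²)). -/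
open Filter Topology RealInnerProductSpace


private lemma L1' : Tendsto (fun t : ℝ => (Real.exp t - 1)/t) (𝓝[≠] (0:ℝ)) (𝓝 1) := by
  have h2 := hasDerivAt_iff_tendsto_slope.mp (Real.hasDerivAt_exp 0)
  rw [Real.exp_zero] at h2
  refine h2.congr fun t => ?_
  rw [slope_def_field, Real.exp_zero, sub_zero]

private lemma L2' : Tendsto (fun t : ℝ => (Real.exp t - 1 - t)/t^2) (𝓝[≠] (0:ℝ)) (𝓝 (1/2)) := by
  apply HasDerivAt.lhopital_zero_nhdsNE
    (f' := fun t : ℝ => Real.exp t - 1) (g' := fun t : ℝ => 2*t)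
  · filter_upwards with t
    exact ((Real.hasDerivAt_exp t).sub_const 1).sub (hasDerivAt_id t)
  · filter_upwards with t
    simpa using (hasDerivAt_pow 2 t)
  · filter_upwards [self_mem_nhdsWithin] with t (ht : t ≠ 0)
    simpa using ht
  · have : Tendsto (fun t : ℝ => Real.exp t - 1 - t) (𝓝 0) (𝓝 (Real.exp 0 - 1 - 0)) :=
      ((Real.continuous_exp.sub continuous_const).sub continuous_id).tendsto 0
    simpa using this.mono_left nhdsWithin_le_nhds
  · have : Tendsto (fun t : ℝ => t^2) (𝓝 0) (𝓝 ((0:ℝ)^2)) := (continuous_pow 2).tendsto 0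
    simpa using this.mono_left nhdsWithin_le_nhds
  · have h : Tendsto (fun t : ℝ => (Real.exp t - 1)/t * (1/2)) (𝓝[≠] (0:ℝ)) (𝓝 (1 * (1/2))) :=
      L1'.mul_const _
    refine (h.congr fun t => ?_).mono_right (by norm_num)
    rw [div_mul_div_comm, mul_one, mul_comm t 2]

private lemma limNum (c : ℝ) :
    Tendsto (fun α : ℝ => (1 - Real.exp (c*α - α^2/2))/α) (𝓝[≠] (0:ℝ)) (𝓝 (-c)) := by
  have hg : HasDerivAt (fun α : ℝ => c*α - α^2/2) c 0 := by
    have h1 : HasDerivAt (fun α : ℝ => c*α) c 0 := by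
      simpa using (hasDerivAt_id (0:ℝ)).const_mul c
    have h2 : HasDerivAt (fun α : ℝ => α^2/2) 0 0 := by
      simpa using (hasDerivAt_pow 2 (0:ℝ)).div_const 2
    exact (h1.sub h2).congr_deriv (by ring)
  have hf : HasDerivAt (fun α : ℝ => 1 - Real.exp (c*α - α^2/2)) (-c) 0 := by
    have h3 := (Real.hasDerivAt_exp (c*0 - 0^2/2)).comp 0 hg
    have h4 : HasDerivAt (fun α : ℝ => Real.exp (c*α - α^2/2)) c 0 := by
      exact h3.congr_deriv (by simp)
    exact ((hasDerivAt_const (0:ℝ) (1:ℝ)).sub h4).congr_deriv (by ring)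
  have h2 := hasDerivAt_iff_tendsto_slope.mp hf
  refine h2.congr fun t => ?_
  rw [slope_def_field]
  norm_num

private lemma evNe (s : ℝ) : ∀ᶠ α in 𝓝[≠] (0:ℝ), α*s - α^2/2 ≠ 0 ∧ -(α*s) - α^2/2 ≠ 0 := by
  rcases eq_or_ne s 0 with rfl | hs0
  · filter_upwards [self_mem_nhdsWithin] with α (hα : α ≠ 0)
    have h2 : α^2 ≠ 0 := pow_ne_zero 2 hα
    constructor <;> · intro h; apply h2; nlinarith
  · have h1 : ∀ᶠ α in 𝓝 (0:ℝ), |α| < |s| := by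
      simpa using eventually_abs_sub_lt (0:ℝ) (abs_pos.mpr hs0)
    filter_upwards [h1.filter_mono nhdsWithin_le_nhds, self_mem_nhdsWithin] with α habs
      (hα : α ≠ 0)
    have haq : |α/2| = |α|/2 := by rw [abs_div, abs_two]
    have hap : 0 < |α| := abs_pos.mpr hα
    constructor <;> intro h
    · have h2 : α * (s - α/2) = 0 := by linear_combination h
      rcases mul_eq_zero.mp h2 with h3 | h3
      · exact hα h3
      · have hs : |s| = |α|/2 := by rw [show s = α/2 by linarith, haq]
        rw [hs] at habs; linarith
    · have h2 : α * (s + α/2) = 0 := by linear_combination -h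
      rcases mul_eq_zero.mp h2 with h3 | h3
      · exact hα h3
      · have hs : |s| = |α|/2 := by rw [show s = -(α/2) by linarith, abs_neg, haq]
        rw [hs] at habs; linarith

private lemma limQ (s : ℝ) :
    Tendsto (fun α : ℝ =>
        (2 - Real.exp (α*s - α^2/2) - Real.exp (-(α*s) - α^2/2))/α^2)
      (𝓝[≠] (0:ℝ)) (𝓝 (1 - s^2)) := by
  have hA : Tendsto (fun α : ℝ => α*s - α^2/2) (𝓝[≠] (0:ℝ)) (𝓝[≠] (0:ℝ)) := by
    rw [tendsto_nhdsWithin_iff]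
    constructor
    · have hc : Continuous fun α : ℝ => α*s - α^2/2 := by continuity
      simpa using (hc.tendsto 0).mono_left nhdsWithin_le_nhds
    · filter_upwards [evNe s] with α hα using hα.1
  have hB : Tendsto (fun α : ℝ => -(α*s) - α^2/2) (𝓝[≠] (0:ℝ)) (𝓝[≠] (0:ℝ)) := by
    rw [tendsto_nhdsWithin_iff]
    constructor
    · have hc : Continuous fun α : ℝ => -(α*s) - α^2/2 := by continuity
      simpa using (hc.tendsto 0).mono_left nhdsWithin_le_nhds
    · filter_upwards [evNe s] with α hα using hα.2
  have hTa := L2'.comp hA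
  have hTb := L2'.comp hB
  have hSa : Tendsto (fun α : ℝ => (α*s - α^2/2)/α) (𝓝[≠] (0:ℝ)) (𝓝 s) := by
    have hc : Tendsto (fun α : ℝ => s - α/2) (𝓝[≠] (0:ℝ)) (𝓝 (s - 0/2)) :=
      ((continuous_const.sub (continuous_id.div_const 2)).tendsto 0).mono_left nhdsWithin_le_nhds
    rw [show s - 0/2 = s by ring] at hc
    refine Tendsto.congr' ?_ hc
    filter_upwards [self_mem_nhdsWithin] with α (hα : α ≠ 0)
    field_simp
  have hSb : Tendsto (fun α : ℝ => (-(α*s) - α^2/2)/α) (𝓝[≠] (0:ℝ)) (𝓝 (-s)) := by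
    have hc : Tendsto (fun α : ℝ => -s - α/2) (𝓝[≠] (0:ℝ)) (𝓝 (-s - 0/2)) :=
      ((continuous_const.sub (continuous_id.div_const 2)).tendsto 0).mono_left nhdsWithin_le_nhds
    rw [show -s - 0/2 = -s by ring] at hc
    refine Tendsto.congr' ?_ hc
    filter_upwards [self_mem_nhdsWithin] with α (hα : α ≠ 0)
    field_simp
  have hcomb :
      Tendsto (fun α : ℝ => 1
          - (Real.exp (α*s - α^2/2) - 1 - (α*s - α^2/2))/(α*s - α^2/2)^2 * ((α*s - α^2/2)/α)^2
          - (Real.exp (-(α*s) - α^2/2) - 1 - (-(α*s) - α^2/2))/(-(α*s) - α^2/2)^2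
              * ((-(α*s) - α^2/2)/α)^2)
        (𝓝[≠] (0:ℝ)) (𝓝 (1 - 1/2 * s^2 - 1/2 * (-s)^2)) :=
    (tendsto_const_nhds.sub (hTa.mul (hSa.pow 2))).sub (hTb.mul (hSb.pow 2))
  have hval : 1 - 1/2 * s^2 - 1/2 * (-s)^2 = 1 - s^2 := by ring
  rw [hval] at hcomb
  refine Tendsto.congr' ?_ hcomb
  filter_upwards [evNe s, self_mem_nhdsWithin] with α hne (hα : α ≠ 0)
  obtain ⟨ha, hb⟩ := hne
  have step : ∀ X aa : ℝ, aa ≠ 0 → X/aa^2 * ((aa/α)^2) = X/α^2 := by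
    intro X aa haa
    rw [div_pow, div_mul_div_comm, mul_comm (aa^2), mul_div_mul_right _ _ (pow_ne_zero 2 haa)]
  rw [step _ _ ha, step _ _ hb]
  have hα2 : (α:ℝ)^2 ≠ 0 := pow_ne_zero 2 hα
  field_simp
  ring

private lemma limP :
    Tendsto (fun α : ℝ => (1 - Real.exp (-α^2/2))/α^2) (𝓝[≠] (0:ℝ)) (𝓝 (1/2)) := by
  have hT : Tendsto (fun α : ℝ => -α^2/2) (𝓝[≠] (0:ℝ)) (𝓝[≠] (0:ℝ)) := by
    rw [tendsto_nhdsWithin_iff]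
    constructor
    · have hc : Continuous fun α : ℝ => -α^2/2 := by continuity
      simpa using (hc.tendsto 0).mono_left nhdsWithin_le_nhds
    · filter_upwards [self_mem_nhdsWithin] with α (hα : α ≠ 0)
      have : α^2 ≠ 0 := pow_ne_zero 2 hα
      simp only [Set.mem_compl_iff, Set.mem_singleton_iff]
      intro h
      apply this; linarith
  have hTa := L2'.comp hT
  have hS : Tendsto (fun α : ℝ => ((-α^2/2)/α)^2) (𝓝[≠] (0:ℝ)) (𝓝 ((0:ℝ)^2)) := by
    have hc : Tendsto (fun α : ℝ => -α/2) (𝓝[≠] (0:ℝ)) (𝓝 (-(0:ℝ)/2)) :=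
      (((continuous_id.neg).div_const 2).tendsto 0).mono_left nhdsWithin_le_nhds
    rw [show -(0:ℝ)/2 = 0 by ring] at hc
    refine (Tendsto.congr' ?_ hc).pow 2
    filter_upwards [self_mem_nhdsWithin] with α (hα : α ≠ 0)
    field_simp
  have hcomb : Tendsto (fun α : ℝ =>
      1/2 - (Real.exp (-α^2/2) - 1 - (-α^2/2))/(-α^2/2)^2 * ((-α^2/2)/α)^2)
      (𝓝[≠] (0:ℝ)) (𝓝 (1/2 - 1/2 * (0:ℝ)^2)) :=
    tendsto_const_nhds.sub (hTa.mul hS)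
  rw [show 1/2 - 1/2*(0:ℝ)^2 = 1/2 by ring] at hcomb
  refine Tendsto.congr' ?_ hcomb
  filter_upwards [self_mem_nhdsWithin] with α (hα : α ≠ 0)
  have ha : -α^2/2 ≠ 0 := by
    have : α^2 ≠ 0 := pow_ne_zero 2 hα
    intro h; apply this; linarith
  have step : ∀ X aa : ℝ, aa ≠ 0 → X/aa^2 * ((aa/α)^2) = X/α^2 := by
    intro X aa haa
    rw [div_pow, div_mul_div_comm, mul_comm (aa^2), mul_div_mul_right _ _ (pow_ne_zero 2 haa)]
  rw [step _ _ ha]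
  have hα2 : (α:ℝ)^2 ≠ 0 := pow_ne_zero 2 hα
  field_simp
  ring

private lemma limD (lam s ω : ℝ) :
    Tendsto (fun α : ℝ => (2*(1+lam^2)*(1 - Real.exp (-α^2/2))
        + 2*lam*(2*ω - ω*Real.exp (-α^2/2)*(Real.exp (α*s) + Real.exp (-(α*s)))))/α^2)
      (𝓝[≠] (0:ℝ)) (𝓝 ((1+lam^2) + 2*lam*ω*(1-s^2))) := by
  have hcomb : Tendsto (fun α : ℝ => 2*(1+lam^2)*((1 - Real.exp (-α^2/2))/α^2)
      + 2*lam*ω*((2 - Real.exp (α*s - α^2/2) - Real.exp (-(α*s) - α^2/2))/α^2))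
      (𝓝[≠] (0:ℝ)) (𝓝 (2*(1+lam^2)*(1/2) + 2*lam*ω*(1-s^2))) :=
    (limP.const_mul _).add ((limQ s).const_mul _)
  rw [show 2*(1+lam^2)*(1/2: ℝ) + 2*lam*ω*(1-s^2) = (1+lam^2) + 2*lam*ω*(1-s^2) by ring]
    at hcomb
  refine Tendsto.congr' ?_ hcomb
  filter_upwards with α
  have he1 : Real.exp (-α^2/2) * Real.exp (α*s) = Real.exp (α*s - α^2/2) := by
    rw [← Real.exp_add]; congr 1; ring
  have he2 : Real.exp (-α^2/2) * Real.exp (-(α*s)) = Real.exp (-(α*s) - α^2/2) := by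
    rw [← Real.exp_add]; congr 1; ring
  rw [← he1, ← he2]
  ring

/-- scalar reduction (paired against `e^y`) of the convergence of the
normalized differences `(c_λ(u,v) − W_{αz} c_λ(u,v)) / ‖…‖` to the state
`(z#c(u) + λ·z#c(v))/‖…‖` as the influence fades away. -/
theorem stmt3 {E : Type*} [NormedAddCommGroup E] [InnerProductSpace ℝ E]
    (u v z y : E) (hz : ‖z‖ = 1) (lam s ω : ℝ)
    (hs : s = ⟪u - v, z⟫)
    (hω : ω = Real.exp (-‖u - v‖ ^ 2 / 2))
    (Ex : E → ℝ) (hEx : ∀ x, Ex x = Real.exp (⟪x, y⟫ - ‖x‖ ^ 2 / 2))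
    (hpos : (1 + lam ^ 2) + 2 * lam * ω * (1 - s ^ 2) > 0) :
    Tendsto (fun α : ℝ =>
        (Ex u - Ex (u + α • z) + lam * (Ex v - Ex (v + α • z)))
        / Real.sqrt (2 * (1 + lam ^ 2) * (1 - Real.exp (-α ^ 2 / 2))
            + 2 * lam * (2 * ω
                - ω * Real.exp (-α ^ 2 / 2) * (Real.exp (α * s) + Real.exp (-(α * s))))))
      (𝓝[>] (0 : ℝ))
      (𝓝 (((⟪u, z⟫ - ⟪z, y⟫) * Ex u + lam * (⟪v, z⟫ - ⟪z, y⟫) * Ex v)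
        / Real.sqrt ((1 + lam ^ 2) + 2 * lam * ω * (1 - s ^ 2)))) := by
  have hmono : 𝓝[>] (0:ℝ) ≤ 𝓝[≠] (0:ℝ) :=
    nhdsWithin_mono 0 (fun x hx => ne_of_gt hx)
  -- coherent vector shift formula
  have key : ∀ (x : E) (α : ℝ),
      Ex (x + α • z) = Ex x * Real.exp ((⟪z,y⟫ - ⟪x,z⟫)*α - α^2/2) := by
    intro x α
    rw [hEx, hEx, ← Real.exp_add]
    congr 1
    have h1 : ⟪x + α • z, y⟫ = ⟪x,y⟫ + α*⟪z,y⟫ := by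
      rw [inner_add_left, real_inner_smul_left]
    have h2 : ‖x + α • z‖^2 = ‖x‖^2 + 2*(α*⟪x,z⟫) + α^2 := by
      rw [norm_add_sq_real, real_inner_smul_right, norm_smul, hz]
      simp [Real.norm_eq_abs, mul_pow, sq_abs]
    rw [h1, h2]; ring
  -- numerator limit
  have limNfull : Tendsto
      (fun α : ℝ => (Ex u - Ex (u + α • z) + lam * (Ex v - Ex (v + α • z)))/α)
      (𝓝[≠] (0:ℝ))
      (𝓝 (Ex u * -(⟪z,y⟫ - ⟪u,z⟫) + lam * (Ex v * -(⟪z,y⟫ - ⟪v,z⟫)))) := by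
    have h1 := (limNum (⟪z,y⟫ - ⟪u,z⟫)).const_mul (Ex u)
    have h2 := ((limNum (⟪z,y⟫ - ⟪v,z⟫)).const_mul (Ex v)).const_mul lam
    refine Tendsto.congr' ?_ (h1.add h2)
    filter_upwards with α
    rw [key u α, key v α]
    ring
  -- denominator limit
  have limH : Tendsto
      (fun α : ℝ => Real.sqrt (2*(1+lam^2)*(1 - Real.exp (-α^2/2))
        + 2*lam*(2*ω - ω*Real.exp (-α^2/2)*(Real.exp (α*s) + Real.exp (-(α*s)))))/α)
      (𝓝[>] (0:ℝ)) (𝓝 (Real.sqrt ((1+lam^2) + 2*lam*ω*(1-s^2)))) := by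
    have h1 := (Real.continuous_sqrt.tendsto ((1+lam^2) + 2*lam*ω*(1-s^2))).comp
      (limD lam s ω)
    refine Tendsto.congr' ?_ (h1.mono_left hmono)
    filter_upwards [self_mem_nhdsWithin] with α (hα : (0:ℝ) < α)
    set Dv := 2*(1+lam^2)*(1 - Real.exp (-α^2/2))
        + 2*lam*(2*ω - ω*Real.exp (-α^2/2)*(Real.exp (α*s) + Real.exp (-(α*s)))) with hDv
    show Real.sqrt (Dv / α^2) = Real.sqrt Dv / α
    rcases le_or_gt 0 Dv with hD | hD
    · rw [Real.sqrt_div hD, Real.sqrt_sq hα.le]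
    · have h3 : Dv / α^2 ≤ 0 := div_nonpos_iff.mpr (Or.inr ⟨hD.le, sq_nonneg α⟩)
      rw [Real.sqrt_eq_zero_of_nonpos hD.le, Real.sqrt_eq_zero_of_nonpos h3, zero_div]
  have hsL : Real.sqrt ((1+lam^2) + 2*lam*ω*(1-s^2)) ≠ 0 :=
    (Real.sqrt_pos.mpr hpos).ne'
  have final := (limNfull.mono_left hmono).div limH hsL
  rw [show (Ex u * -(⟪z,y⟫ - ⟪u,z⟫) + lam * (Ex v * -(⟪z,y⟫ - ⟪v,z⟫)))
      = ((⟪u, z⟫ - ⟪z, y⟫) * Ex u + lam * (⟪v, z⟫ - ⟪z, y⟫) * Ex v) by ring] at final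
  refine Tendsto.congr' ?_ final
  filter_upwards [self_mem_nhdsWithin] with α (hα : (0:ℝ) < α)
  set N := Ex u - Ex (u + α • z) + lam * (Ex v - Ex (v + α • z))
  set Dv := 2*(1+lam^2)*(1 - Real.exp (-α^2/2))
      + 2*lam*(2*ω - ω*Real.exp (-α^2/2)*(Real.exp (α*s) + Real.exp (-(α*s))))
  show N/α / (Real.sqrt Dv / α) = N / Real.sqrt Dv
  rcases eq_or_ne (Real.sqrt Dv) 0 with h0 | h0
  · rw [h0]; simp
  · field_simp
end

section
/- Let a, b, μ, λ, ω be real numbers with a > 0, b > 0, a² + b² = 1, and μ ≠ 0. In the Euclidean space ℝ², let u = μ•(a, b), v = μ•(b, a), and let Q be the orthogonal projection onto the first coordinate, Q(x₁, x₂) = (x₁, 0). Then ‖Qu‖² + 2λω⟪Qu, v⟫ + λ²‖Qv‖² = μ²(a² + 2λωab + λ²b²) and ‖u‖² + 2λω⟪u, v⟫ + λ²‖v‖² = μ²(1 + λ² + 4λωab); consequently, if 1 + λ² + 4λωab ≠ 0, then (‖Qu‖² + 2λω⟪Qu, v⟫ + λ²‖Qv‖²)/(‖u‖² + 2λω⟪u,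 v⟫ + λ²‖v‖²) = (a² + 2λωab + λ²b²)/(1 + λ² + 4λωab). -/
open RealInnerProductSpace

/-- the model computation of `κ(Q;λ,u,v,ω)`, `κ(I;λ,u,v,ω)` and the
relative expectation `R_ω(Q,λ,u,v)` for `u = μ(a,b)`, `v = μ(b,a)` and `Q` the
orthogonal projection onto the first coordinate. -/
theorem stmt6 (a b μ lam ω : ℝ) (ha : a > 0) (hb : b > 0) (hab : a ^ 2 + b ^ 2 = 1)
    (hμ : μ ≠ 0)
    (u v : EuclideanSpace ℝ (Fin 2))
    (hu : u = μ • (WithLp.equiv 2 (Fin 2 → ℝ)).symm ![a, b]) (hv : v = μ • (WithLp.equiv 2 (Fin 2 → ℝ)).symm ![b, a])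
    (Q : EuclideanSpace ℝ (Fin 2) → EuclideanSpace ℝ (Fin 2))
    (hQ : ∀ x, Q x = (WithLp.equiv 2 (Fin 2 → ℝ)).symm ![x 0, 0]) :
    ‖Q u‖ ^ 2 + 2 * lam * ω * ⟪Q u, v⟫ + lam ^ 2 * ‖Q v‖ ^ 2
        = μ ^ 2 * (a ^ 2 + 2 * lam * ω * a * b + lam ^ 2 * b ^ 2)
    ∧ ‖u‖ ^ 2 + 2 * lam * ω * ⟪u, v⟫ + lam ^ 2 * ‖v‖ ^ 2
        = μ ^ 2 * (1 + lam ^ 2 + 4 * lam * ω * a * b)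
    ∧ (1 + lam ^ 2 + 4 * lam * ω * a * b ≠ 0 →
        (‖Q u‖ ^ 2 + 2 * lam * ω * ⟪Q u, v⟫ + lam ^ 2 * ‖Q v‖ ^ 2)
          / (‖u‖ ^ 2 + 2 * lam * ω * ⟪u, v⟫ + lam ^ 2 * ‖v‖ ^ 2)
        = (a ^ 2 + 2 * lam * ω * a * b + lam ^ 2 * b ^ 2)
          / (1 + lam ^ 2 + 4 * lam * ω * a * b)) := by
  have hnsq : ∀ x : EuclideanSpace ℝ (Fin 2), ‖x‖ ^ 2 = ⟪x, x⟫ := fun x =>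
    (real_inner_self_eq_norm_sq x).symm
  have hinner : ∀ x y : EuclideanSpace ℝ (Fin 2), ⟪x, y⟫ = x 0 * y 0 + x 1 * y 1 := by
    intro x y
    simp [PiLp.inner_apply, Fin.sum_univ_two]
    ring
  have h1 : ‖Q u‖ ^ 2 + 2 * lam * ω * ⟪Q u, v⟫ + lam ^ 2 * ‖Q v‖ ^ 2
      = μ ^ 2 * (a ^ 2 + 2 * lam * ω * a * b + lam ^ 2 * b ^ 2) := by
    rw [hnsq, hnsq, hinner, hinner, hinner, hQ, hQ, hu, hv]
    simp [WithLp.equiv_symm_apply, PiLp.smul_apply, smul_eq_mul, Matrix.cons_val_zero, Matrix.cons_val_one, Matrix.head_cons]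
    ring
  have h2 : ‖u‖ ^ 2 + 2 * lam * ω * ⟪u, v⟫ + lam ^ 2 * ‖v‖ ^ 2
      = μ ^ 2 * (1 + lam ^ 2 + 4 * lam * ω * a * b) := by
    rw [hnsq, hnsq, hinner, hinner, hinner, hu, hv]
    simp [WithLp.equiv_symm_apply, PiLp.smul_apply, smul_eq_mul, Matrix.cons_val_zero, Matrix.cons_val_one, Matrix.head_cons]
    linear_combination (1 + lam ^ 2) * μ ^ 2 * hab
  refine ⟨h1, h2, fun hne => ?_⟩
  rw [h1, h2, mul_div_mul_left _ _ (pow_ne_zero 2 hμ)]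
end

section
/- Let a, b, ω be real numbers with a > 0, b > 0, a² + b² = 1, b < a, and 0 < ω ≤ 1. Define F : ℝ → ℝ by F(λ) = (a² + 2λωab + λ²b²)/(1 + λ² + 4λωab). Then there exists λ < 0 such that 1 + λ² + 4λωab > 0 and F(λ) > a². -/
/-! Write `t = ω a b`. Using `a² + b² = 1`, the numerator of `F(λ) - a²` factors as
`(a² - b²) · (-λ) · (λ + 2t)`, which is positive for `-2t < λ < 0` when `b < a`.
Taking `λ = -t`, the denominator is `1 - 3t²`, positive because `t ≤ ab ≤ (a² + b²)/2 = 1/2`. -/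

section

variable {a b t lam : ℝ}

theorem num_sub_sq_mul_den_eq (hab : a ^ 2 + b ^ 2 = 1) :
    (a ^ 2 + 2 * lam * t + lam ^ 2 * b ^ 2) - a ^ 2 * (1 + lam ^ 2 + 4 * lam * t) =
      (a ^ 2 - b ^ 2) * (-lam) * (lam + 2 * t) := by
  linear_combination (-2 * lam * t) * hab

theorem sq_lt_div_of_mem_Ioo (hab : a ^ 2 + b ^ 2 = 1) (hba : b ^ 2 < a ^ 2)
    (hlam : lam ∈ Set.Ioo (-2 * t) 0) (hden : 0 < 1 + lam ^ 2 + 4 * lam * t) :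
    a ^ 2 < (a ^ 2 + 2 * lam * t + lam ^ 2 * b ^ 2) / (1 + lam ^ 2 + 4 * lam * t) := by
  rw [lt_div_iff₀ hden, ← sub_pos, num_sub_sq_mul_den_eq hab]
  have hneg : 0 < -lam := neg_pos.2 hlam.2
  have hshift : 0 < lam + 2 * t := by linarith [hlam.1]
  exact mul_pos (mul_pos (sub_pos.2 hba) hneg) hshift

theorem one_add_sq_add_four_mul_pos_at_neg (ht0 : 0 ≤ t) (ht : t ≤ 1 / 2) :
    0 < 1 + (-t) ^ 2 + 4 * (-t) * t := by
  nlinarith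

end

/-- with `b < a` and `0 < ω ≤ 1`, there is a negative `λ` where the
denominator is positive and `F(λ) > a² = F(0)`. -/
theorem stmt9 (a b ω : ℝ) (ha : a > 0) (hb : b > 0) (hab : a ^ 2 + b ^ 2 = 1)
    (hba : b < a) (hω0 : 0 < ω) (hω1 : ω ≤ 1) :
    ∃ lam : ℝ, lam < 0 ∧ 1 + lam ^ 2 + 4 * lam * ω * a * b > 0 ∧
      (a ^ 2 + 2 * lam * ω * a * b + lam ^ 2 * b ^ 2)
        / (1 + lam ^ 2 + 4 * lam * ω * a * b) > a ^ 2 := by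
  have ht0 : 0 < ω * a * b := by positivity
  have ht : ω * a * b ≤ 1 / 2 :=
    calc ω * a * b = ω * (a * b) := mul_assoc ω a b
      _ ≤ a * b := mul_le_of_le_one_left (by positivity) hω1
      _ ≤ 1 / 2 := by linarith [two_mul_le_add_sq a b]
  have hden := one_add_sq_add_four_mul_pos_at_neg ht0.le ht
  have hlam : -(ω * a * b) ∈ Set.Ioo (-2 * (ω * a * b)) 0 := ⟨by linarith, by linarith⟩
  have hF := sq_lt_div_of_mem_Ioo hab (pow_lt_pow_left₀ hba hb.le two_ne_zero) hlam hden
  refine ⟨-(ω * a * b), by linarith, ?_, ?_⟩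
  · convert hden using 1; ring
  · convert hF using 2 <;> ring
end
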